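/- arXiv:0707.0953 — 4 statements merged into one kernel-verified Lean document; each statement's English description precedes it below -/
import Mathlib

section
/- For any weighted lattice polynomial function p : L^n → L, p(x) = ⋁_{S ⊆ [n]} (p(e_S) ∧ ⋀_{i∈S} x_i), where e_S ∈ {a,b}^n is the characteristic vector of S (i-th component b if i ∈ S, else a). -/
/-!
The right-hand side commutes with pointwise `max`, and with pointwise `min` of monotone functions,
so the identity follows by induction on `p`. For a projection `x ↦ x k` the term `S = {k}` already
gives `x k`, and every other term is bounded by `x k`, through the factor `x k` when `k ∈ S` and
through `e_S k = a` otherwise. In the `min` case the terms of the two forms at `S` and `T` are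
dominated by the term at `S ∪ T`, because `p`, `q` and `S ↦ e_S` are monotone.
-/

open Finset MeasureTheory ProbabilityTheory

/-- Weighted lattice polynomial functions on the interval L = [a,b] ⊆ ℝ:
built inductively from projections, constants in [a,b], pointwise min and max. -/
inductive IsWLP (a b : ℝ) (n : ℕ) : ((Fin n → ℝ) → ℝ) → Prop
  | proj (k : Fin n) : IsWLP a b n (fun x => x k)
  | const (c : ℝ) (hc : c ∈ Set.Icc a b) : IsWLP a b n (fun _ => c)
  | inf {p q} : IsWLP a b n p → IsWLP a b n q → IsWLP a b n (fun x => min (p x) (q x))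
  | sup {p q} : IsWLP a b n p → IsWLP a b n q → IsWLP a b n (fun x => max (p x) (q x))

/-- The characteristic vector e_S of S ⊆ [n] in {a,b}^n. -/
def charVec (a b : ℝ) {n : ℕ} (S : Finset (Fin n)) : Fin n → ℝ := fun i => if i ∈ S then b else a

theorem IsWLP.monotone {a b : ℝ} {n : ℕ} {p : (Fin n → ℝ) → ℝ} (hp : IsWLP a b n p) :
    Monotone p := by
  induction hp with
  | proj k => exact fun x y h => h k
  | const c _ => exact monotone_const
  | inf _ _ ihp ihq => exact fun x y h => min_le_min (ihp h) (ihq h)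
  | sup _ _ ihp ihq => exact fun x y h => max_le_max (ihp h) (ihq h)

theorem charVec_mono {a b : ℝ} (hab : a ≤ b) {n : ℕ} : Monotone (charVec a b (n := n)) := by
  intro S T hST i
  by_cases hS : i ∈ S
  · simp [charVec, hS, hST hS]
  · by_cases hT : i ∈ T <;> simp [charVec, hS, hT, hab]

theorem fold_min_union {ι α : Type*} [DecidableEq ι] [LinearOrder α] (b : α) (x : ι → α)
    (S T : Finset ι) :
    (S ∪ T).fold min b x = min (S.fold min b x) (T.fold min b x) := by
  apply le_antisymm
  · obtain ⟨hb, hST⟩ := (le_fold_min _).1 (le_refl ((S ∪ T).fold min b x))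
    exact le_min ((le_fold_min _).2 ⟨hb, fun i hi => hST i (mem_union_left T hi)⟩)
      ((le_fold_min _).2 ⟨hb, fun i hi => hST i (mem_union_right S hi)⟩)
  · simp only [le_fold_min, mem_union]
    refine ⟨min_le_of_left_le (fold_min_le _ |>.2 (.inl le_rfl)), ?_⟩
    rintro i (hi | hi)
    · exact min_le_of_left_le (fold_min_le _ |>.2 (.inr ⟨i, hi, le_rfl⟩))
    · exact min_le_of_right_le (fold_min_le _ |>.2 (.inr ⟨i, hi, le_rfl⟩))

/-- `⋁_{S ⊆ [n]} (p(e_S) ∧ ⋀_{i∈S} x_i)`, with `⋀_{i∈∅} x_i = b`. -/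
noncomputable def canonicalDisjForm (a b : ℝ) {n : ℕ} (p : (Fin n → ℝ) → ℝ) (x : Fin n → ℝ) :
    ℝ :=
  (univ (α := Fin n)).powerset.sup' (powerset_nonempty _)
    (fun S => min (p (charVec a b S)) (S.fold min b x))

section canonicalDisjForm

variable {a b : ℝ} {n : ℕ} {p q : (Fin n → ℝ) → ℝ} {x : Fin n → ℝ}

theorem le_canonicalDisjForm (S : Finset (Fin n)) :
    min (p (charVec a b S)) (S.fold min b x) ≤ canonicalDisjForm a b p x :=
  le_sup' (fun S => min (p (charVec a b S)) (S.fold min b x)) (mem_powerset.2 (subset_univ S))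

theorem canonicalDisjForm_le {c : ℝ}
    (h : ∀ S : Finset (Fin n), min (p (charVec a b S)) (S.fold min b x) ≤ c) :
    canonicalDisjForm a b p x ≤ c :=
  sup'_le _ _ fun S _ => h S

theorem canonicalDisjForm_proj (k : Fin n) (hx : x k ∈ Set.Icc a b) :
    canonicalDisjForm a b (fun y => y k) x = x k := by
  apply le_antisymm
  · refine canonicalDisjForm_le fun S => ?_
    by_cases hk : k ∈ S
    · exact min_le_of_right_le (fold_min_le _ |>.2 (.inr ⟨k, hk, le_rfl⟩))
    · simpa [charVec, hk] using .inl hx.1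
  · simpa [charVec, hx.2] using
      le_canonicalDisjForm (p := fun y => y k) (a := a) (b := b) (x := x) {k}

theorem canonicalDisjForm_const {c : ℝ} (hc : c ≤ b) :
    canonicalDisjForm a b (fun _ => c) x = c :=
  le_antisymm (canonicalDisjForm_le fun _ => min_le_left _ _)
    (by simpa [hc] using le_canonicalDisjForm (p := fun _ => c) (a := a) (b := b) (x := x) ∅)

theorem canonicalDisjForm_max :
    canonicalDisjForm a b (fun y => max (p y) (q y)) x =
      max (canonicalDisjForm a b p x) (canonicalDisjForm a b q x) := by
  apply le_antisymm
  · refine canonicalDisjForm_le fun S => ?_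
    rw [min_max_distrib_right]
    exact max_le_max (le_canonicalDisjForm S) (le_canonicalDisjForm S)
  · refine max_le (canonicalDisjForm_le fun S => ?_) (canonicalDisjForm_le fun S => ?_) <;>
      refine le_trans ?_ (le_canonicalDisjForm S) <;>
      gcongr
    exacts [le_max_left _ _, le_max_right _ _]

theorem canonicalDisjForm_min (hab : a ≤ b) (hp : Monotone p) (hq : Monotone q) :
    canonicalDisjForm a b (fun y => min (p y) (q y)) x =
      min (canonicalDisjForm a b p x) (canonicalDisjForm a b q x) := by
  apply le_antisymm
  · refine canonicalDisjForm_le fun S => le_min ?_ ?_ <;>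
      refine le_trans ?_ (le_canonicalDisjForm S) <;>
      gcongr
    exacts [min_le_left _ _, min_le_right _ _]
  · rw [canonicalDisjForm, canonicalDisjForm]
    refine (sup'_inf_sup' _ _ _ _).trans_le (sup'_le _ _ fun ⟨S, T⟩ _ => ?_)
    refine le_trans ?_ (le_canonicalDisjForm (S ∪ T))
    rw [fold_min_union]
    refine le_min (le_min ?_ ?_) (min_le_min (min_le_right _ _) (min_le_right _ _))
    · exact min_le_of_left_le <| min_le_of_left_le <|
        hp (charVec_mono hab subset_union_left)
    · exact min_le_of_right_le <| min_le_of_left_le <|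
        hq (charVec_mono hab subset_union_right)

end canonicalDisjForm

/-- Canonical disjunctive form: p(x) = ⋁_{S ⊆ [n]} (p(e_S) ∧ ⋀_{i∈S} x_i). -/
theorem wlp_canonical_disjunctive_form (a b : ℝ) (hab : a ≤ b) (n : ℕ)
    (p : (Fin n → ℝ) → ℝ) (hp : IsWLP a b n p) :
    ∀ x : Fin n → ℝ, (∀ i, x i ∈ Set.Icc a b) →
      p x = (Finset.univ (α := Fin n)).powerset.sup' (Finset.powerset_nonempty _)
        (fun S => min (p (charVec a b S)) (S.fold min b x)) := by
  intro x hx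
  change p x = canonicalDisjForm a b p x
  induction hp with
  | proj k => exact (canonicalDisjForm_proj k (hx k)).symm
  | const c hc => exact (canonicalDisjForm_const hc.2).symm
  | inf hp hq ihp ihq => rw [canonicalDisjForm_min hab hp.monotone hq.monotone, ← ihp, ← ihq]
  | sup _ _ ihp ihq => rw [canonicalDisjForm_max, ← ihp, ← ihq]
end

section
/- For any weighted lattice polynomial function p : L^n → L, p(x) = ⋀_{S ⊆ [n]} (p(e_{[n]∖S}) ∨ ⋁_{i∈S} x_i). -/
/-!
Weighted lattice polynomial functions are monotone, satisfy `p (z ∨ c) ≤ p z ∨ c`, and whether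
`p x ≤ c` holds depends only on which coordinates of `x` are `≤ c`. The first two facts make every
term `p(e_{[n]∖S}) ∨ ⋁_{i∈S} x_i` an upper bound of `p x`. The third, at the threshold `c = p x`,
shows that `p(e_{[n]∖S}) ≤ p x` for `S = {i | x_i ≤ p x}`, so this term equals `p x`.
-/

open Finset MeasureTheory ProbabilityTheory

namespace IsWLP

variable {a b : ℝ} {n : ℕ} {p : (Fin n → ℝ) → ℝ}

theorem monotone_s3 (hp : IsWLP a b n p) : Monotone p := by
  induction hp with
  | proj k => exact fun _ _ h => h k
  | const _ _ => exact monotone_const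
  | inf _ _ ihp ihq => exact fun _ _ h => min_le_min (ihp h) (ihq h)
  | sup _ _ ihp ihq => exact fun _ _ h => max_le_max (ihp h) (ihq h)

theorem le_apply (hp : IsWLP a b n p) {x : Fin n → ℝ} (hx : ∀ i, a ≤ x i) : a ≤ p x := by
  induction hp with
  | proj k => exact hx k
  | const c hc => exact hc.1
  | inf _ _ ihp ihq => exact le_min ihp ihq
  | sup _ _ ihp _ => exact ihp.trans (le_max_left _ _)

theorem apply_max_const_le (hp : IsWLP a b n p) (z : Fin n → ℝ) (c : ℝ) :
    p (fun i => max (z i) c) ≤ max (p z) c := by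
  induction hp with
  | proj _ => exact le_rfl
  | const _ _ => exact le_max_left _ _
  | inf _ _ ihp ihq => exact (min_le_min ihp ihq).trans_eq (max_min_distrib_right _ _ _).symm
  | sup _ _ ihp ihq => exact (max_le_max ihp ihq).trans_eq (sup_sup_distrib_right _ _ _).symm

theorem apply_le_iff_of_forall_le_iff (hp : IsWLP a b n p) {c : ℝ} {x y : Fin n → ℝ}
    (h : ∀ i, x i ≤ c ↔ y i ≤ c) : p x ≤ c ↔ p y ≤ c := by
  induction hp with
  | proj k => exact h k
  | const _ _ => exact Iff.rfl
  | inf _ _ ihp ihq => simp only [min_le_iff, ihp, ihq]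
  | sup _ _ ihp ihq => simp only [max_le_iff, ihp, ihq]

theorem apply_le_max_fold (hp : IsWLP a b n p) {x : Fin n → ℝ} (hx : ∀ i, x i ≤ b)
    (S : Finset (Fin n)) : p x ≤ max (p (charVec a b Sᶜ)) (S.fold max a x) := by
  have hle : x ≤ fun i => max (charVec a b Sᶜ i) (S.fold max a x) := by
    intro i
    by_cases hi : i ∈ S
    · exact (le_fold_max _).mpr (Or.inr ⟨i, hi, le_rfl⟩) |>.trans (le_max_right _ _)
    · exact (hx i).trans <| by simp [charVec, hi]
  exact (hp.monotone_s3 hle).trans (hp.apply_max_const_le _ _)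

theorem max_charVec_fold_le_of_mem_iff (hp : IsWLP a b n p) {x : Fin n → ℝ}
    (hx : ∀ i, x i ∈ Set.Icc a b) {S : Finset (Fin n)} (hS : ∀ i, i ∈ S ↔ x i ≤ p x) :
    max (p (charVec a b Sᶜ)) (S.fold max a x) ≤ p x := by
  have hax : a ≤ p x := hp.le_apply fun i => (hx i).1
  have hthreshold (i : Fin n) : x i ≤ p x ↔ charVec a b Sᶜ i ≤ p x := by
    by_cases h : x i ≤ p x
    · simp [charVec, hS, h, hax]
    · simpa [charVec, hS, h] using (lt_of_not_ge h).trans_le (hx i).2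
  refine max_le ((hp.apply_le_iff_of_forall_le_iff hthreshold).mp le_rfl) ?_
  exact (fold_max_le _).mpr ⟨hax, fun i hi => (hS i).mp hi⟩

end IsWLP

theorem wlp_canonical_conjunctive_form_general (a b : ℝ) (n : ℕ)
    (p : (Fin n → ℝ) → ℝ) (hp : IsWLP a b n p) :
    ∀ x : Fin n → ℝ, (∀ i, x i ∈ Set.Icc a b) →
      p x = (Finset.univ (α := Fin n)).powerset.inf' (Finset.powerset_nonempty _)
        (fun S => max (p (charVec a b Sᶜ)) (S.fold max a x)) := by
  intro x hx
  refine le_antisymm (le_inf' _ _ fun S _ => hp.apply_le_max_fold (fun i => (hx i).2) S) ?_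
  exact inf'_le_of_le _ (mem_powerset.mpr (subset_univ (univ.filter fun i => x i ≤ p x)))
    (hp.max_charVec_fold_le_of_mem_iff hx (by simp))

/-- Canonical conjunctive form: p(x) = ⋀_{S ⊆ [n]} (p(e_{[n]∖S}) ∨ ⋁_{i∈S} x_i). -/
theorem wlp_canonical_conjunctive_form (a b : ℝ) (hab : a ≤ b) (n : ℕ)
    (p : (Fin n → ℝ) → ℝ) (hp : IsWLP a b n p) :
    ∀ x : Fin n → ℝ, (∀ i, x i ∈ Set.Icc a b) →
      p x = (Finset.univ (α := Fin n)).powerset.inf' (Finset.powerset_nonempty _)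
        (fun S => max (p (charVec a b Sᶜ)) (S.fold max a x)) :=
  wlp_canonical_conjunctive_form_general a b n p hp
end

section
/- If X_1,...,X_n are independent uniform random variables on [0,1] and p : [0,1]^n → [0,1] is a weighted lattice polynomial function, then for every integer r ≥ 1, (1/r) E[Y_p^r] = Σ_{S ⊆ [n]} B_{p(e_S)}(n − |S| + r, |S| + 1), where B_z(u,v) = ∫_0^z t^{u−1}(1−t)^{v−1} dt is the incomplete beta function. -/
open Finset MeasureTheory ProbabilityTheory

/-!
A lattice polynomial commutes with thresholding: `t ≤ p x` iff `t ≤ p (e_S)` for the set `S` of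
coordinates with `t ≤ x i`. For independent uniform `X i` this set equals a given `S` with
probability `(1 - t)^|S| t^(n - |S|)`, which gives the tail `P(t ≤ Y_p)` as a polynomial in `t`.
The layer cake formula `E[Y^r] = r ∫₀¹ t^(r-1) P(t ≤ Y) dt` then turns each `S` into an incomplete
beta integral cut off at `p(e_S)`.
-/

namespace IsWLP

variable {a b : ℝ} {n : ℕ} {p : (Fin n → ℝ) → ℝ}

theorem continuous (hp : IsWLP a b n p) : Continuous p := by
  induction hp with
  | proj k => exact continuous_apply k
  | const c _ => exact continuous_const
  | inf _ _ ihp ihq => exact ihp.min ihq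
  | sup _ _ ihp ihq => exact ihp.max ihq

theorem mem_Icc (hp : IsWLP a b n p) {x : Fin n → ℝ} (hx : ∀ i, x i ∈ Set.Icc a b) :
    p x ∈ Set.Icc a b := by
  induction hp with
  | proj k => exact hx k
  | const c hc => exact hc
  | inf _ _ ihp ihq => exact ⟨le_min ihp.1 ihq.1, min_le_of_left_le ihp.2⟩
  | sup _ _ ihp ihq => exact ⟨le_max_of_le_left ihp.1, max_le ihp.2 ihq.2⟩

theorem le_apply_iff_le_apply_charVec (hp : IsWLP a b n p) {t : ℝ} (hat : a < t) (htb : t ≤ b)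
    (x : Fin n → ℝ) : t ≤ p x ↔ t ≤ p (charVec a b {i | t ≤ x i}) := by
  induction hp with
  | proj k => by_cases h : t ≤ x k <;> simp [charVec, h, htb, hat]
  | const c _ => rfl
  | inf _ _ ihp ihq => simp only [le_min_iff, ihp, ihq]
  | sup _ _ ihp ihq => simp only [le_max_iff, ihp, ihq]

end IsWLP

theorem charVec_mem_Icc {a b : ℝ} (hab : a ≤ b) {n : ℕ} (S : Finset (Fin n)) (i : Fin n) :
    charVec a b S i ∈ Set.Icc a b := by
  unfold charVec
  split_ifs
  exacts [⟨hab, le_rfl⟩, ⟨le_rfl, hab⟩]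

section Tail

variable {Ω ι : Type*} [MeasurableSpace Ω] {μ : Measure Ω} [Fintype ι] [DecidableEq ι]
  {X : ι → Ω → ℝ}

omit [MeasurableSpace Ω] in
theorem setOf_filter_le_eq (X : ι → Ω → ℝ) (t : ℝ) (S : Finset ι) :
    {ω | ({i | t ≤ X i ω} : Finset ι) = S} =
      ⋂ i, X i ⁻¹' (if i ∈ S then Set.Ici t else Set.Iio t) := by
  ext ω
  simp only [Set.mem_iInter, Set.mem_preimage, Finset.ext_iff,
    Finset.mem_filter, Finset.mem_univ, true_and]
  refine forall_congr' fun i => ?_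
  by_cases hi : i ∈ S <;> simp [hi]

theorem measurableSet_filter_le_eq (hX : ∀ i, Measurable (X i)) (t : ℝ) (S : Finset ι) :
    MeasurableSet {ω | ({i | t ≤ X i ω} : Finset ι) = S} := by
  rw [setOf_filter_le_eq]
  refine MeasurableSet.iInter fun i => hX i ?_
  split_ifs
  exacts [measurableSet_Ici, measurableSet_Iio]

theorem ProbabilityTheory.iIndepFun.measureReal_filter_le_eq
    (hind : iIndepFun X μ) (t : ℝ) (S : Finset ι) :
    μ.real {ω | ({i | t ≤ X i ω} : Finset ι) = S} =
      (∏ i ∈ S, μ.real (X i ⁻¹' Set.Ici t)) * ∏ i ∈ Sᶜ, μ.real (X i ⁻¹' Set.Iio t) := by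
  rw [setOf_filter_le_eq, measureReal_def, hind.meas_iInter, ENNReal.toReal_prod,
    ← Finset.prod_mul_prod_compl S]
  · congr 1 <;> refine Finset.prod_congr rfl fun i hi => ?_
    · simp [hi, measureReal_def]
    · simp [Finset.mem_compl.1 hi, measureReal_def]
  · intro i
    refine ⟨_, ?_, rfl⟩
    split_ifs
    exacts [measurableSet_Ici, measurableSet_Iio]

end Tail

theorem IsWLP.measureReal_le_apply_eq_sum {Ω : Type*} [MeasurableSpace Ω] {μ : Measure Ω}
    [IsFiniteMeasure μ] {a b : ℝ} {n : ℕ} {X : Fin n → Ω → ℝ} (hX : ∀ i, Measurable (X i))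
    {p : (Fin n → ℝ) → ℝ} (hp : IsWLP a b n p) {t : ℝ} (hat : a < t) (htb : t ≤ b) :
    μ.real {ω | t ≤ p (fun i => X i ω)} =
      ∑ S ∈ (Finset.univ : Finset (Fin n)).powerset with t ≤ p (charVec a b S),
        μ.real {ω | ({i | t ≤ X i ω} : Finset (Fin n)) = S} := by
  convert (sum_measureReal_preimage_singleton (μ := μ) _
    (f := fun ω => ({i | t ≤ X i ω} : Finset (Fin n)))
    (fun S _ => measurableSet_filter_le_eq hX t S) fun _ _ => measure_ne_top _ _).symm using 2
  · ext ω
    simp only [Set.mem_preimage, Finset.mem_coe, Finset.mem_filter, Finset.mem_powerset,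
      Finset.subset_univ, true_and]
    exact hp.le_apply_iff_le_apply_charVec hat htb _
  · rfl

section Uniform

variable {Ω : Type*} [MeasurableSpace Ω] {μ : Measure Ω} {Y : Ω → ℝ}

theorem measureReal_preimage_Ici_of_map_eq_uniform (hY : Measurable Y)
    (hunif : μ.map Y = volume.restrict (Set.Icc 0 1)) {t : ℝ} (ht : t ∈ Set.Icc (0 : ℝ) 1) :
    μ.real (Y ⁻¹' Set.Ici t) = 1 - t := by
  rw [← map_measureReal_apply hY measurableSet_Ici, hunif,
    measureReal_restrict_apply measurableSet_Ici,
    show Set.Ici t ∩ Set.Icc 0 1 = Set.Icc t 1 by ext; simp; grind, Real.volume_real_Icc_of_le ht.2]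

theorem measureReal_preimage_Iio_of_map_eq_uniform (hY : Measurable Y)
    (hunif : μ.map Y = volume.restrict (Set.Icc 0 1)) {t : ℝ} (ht : t ∈ Set.Icc (0 : ℝ) 1) :
    μ.real (Y ⁻¹' Set.Iio t) = t := by
  rw [← map_measureReal_apply hY measurableSet_Iio, hunif,
    measureReal_restrict_apply measurableSet_Iio,
    show Set.Iio t ∩ Set.Icc 0 1 = Set.Ico 0 t by ext; simp; grind, Real.volume_real_Ico_of_le ht.1,
    sub_zero]

theorem ae_mem_Icc_of_map_eq_uniform (hY : Measurable Y)
    (hunif : μ.map Y = volume.restrict (Set.Icc 0 1)) : ∀ᵐ ω ∂μ, Y ω ∈ Set.Icc (0 : ℝ) 1 :=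
  ae_of_ae_map hY.aemeasurable (hunif ▸ ae_restrict_mem measurableSet_Icc)

theorem IsWLP.measureReal_le_apply_eq_sum_of_uniform [IsFiniteMeasure μ] {n : ℕ}
    {X : Fin n → Ω → ℝ} (hX : ∀ i, Measurable (X i))
    (hunif : ∀ i, μ.map (X i) = volume.restrict (Set.Icc 0 1)) (hind : iIndepFun X μ)
    {p : (Fin n → ℝ) → ℝ} (hp : IsWLP 0 1 n p) {t : ℝ} (ht0 : 0 < t) (ht1 : t ≤ 1) :
    μ.real {ω | t ≤ p (fun i => X i ω)} =
      ∑ S ∈ (Finset.univ : Finset (Fin n)).powerset,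
        if t ≤ p (charVec 0 1 S) then (1 - t) ^ S.card * t ^ (n - S.card) else 0 := by
  have ht : t ∈ Set.Icc (0 : ℝ) 1 := ⟨ht0.le, ht1⟩
  rw [hp.measureReal_le_apply_eq_sum hX ht0 ht1, Finset.sum_filter]
  refine Finset.sum_congr rfl fun S _ => if_congr Iff.rfl ?_ rfl
  rw [hind.measureReal_filter_le_eq,
    Finset.prod_congr rfl fun i _ => measureReal_preimage_Ici_of_map_eq_uniform (hX i) (hunif i) ht,
    Finset.prod_congr rfl fun i _ => measureReal_preimage_Iio_of_map_eq_uniform (hX i) (hunif i) ht,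
    Finset.prod_const, Finset.prod_const, Finset.card_compl, Fintype.card_fin]

end Uniform

theorem integral_natCast_mul_pow_sub_one {r : ℕ} (hr : r ≠ 0) (y : ℝ) :
    ∫ t in (0 : ℝ)..y, (r : ℝ) * t ^ (r - 1) = y ^ r := by
  have hr1 : 1 ≤ r := Nat.one_le_iff_ne_zero.2 hr
  simp only [intervalIntegral.integral_const_mul, integral_pow, Nat.sub_add_cancel hr1,
    zero_pow hr, sub_zero]
  rw [Nat.cast_sub hr1, Nat.cast_one, sub_add_cancel]
  field_simp

theorem MeasureTheory.IntegrableOn.mul_measureReal_le {α : Type*} [MeasurableSpace α]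
    {μ : Measure α} [IsFiniteMeasure μ] {ν : Measure ℝ} {f : α → ℝ} {g : ℝ → ℝ} {s : Set ℝ}
    (hg : IntegrableOn g s ν) : IntegrableOn (fun t => g t * μ.real {ω | t ≤ f ω}) s ν := by
  refine hg.mul_bdd (Antitone.measurable fun u v huv => ?_).aestronglyMeasurable
    (c := μ.real Set.univ) (ae_of_all _ fun t => ?_)
  · exact measureReal_mono fun ω (h : v ≤ f ω) => huv.trans h
  · rw [Real.norm_eq_abs, abs_of_nonneg measureReal_nonneg]
    exact measureReal_mono (Set.subset_univ _)

theorem integral_pow_eq_mul_intervalIntegral_measureReal_le {α : Type*} [MeasurableSpace α]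
    {μ : Measure α} [IsFiniteMeasure μ] {f : α → ℝ} (hf : AEMeasurable f μ)
    (hf0 : 0 ≤ᵐ[μ] f) (hf1 : ∀ᵐ ω ∂μ, f ω ≤ 1) {r : ℕ} (hr : r ≠ 0) :
    ∫ ω, f ω ^ r ∂μ = r * ∫ t in (0 : ℝ)..1, t ^ (r - 1) * μ.real {ω | t ≤ f ω} := by
  set g : ℝ → ℝ := fun t => r * t ^ (r - 1)
  set F : ℝ → ℝ := fun t => μ.real {ω | t ≤ f ω}
  have hg_nn : ∀ t, 0 ≤ t → 0 ≤ g t := fun t ht => by positivity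
  have hlayer := lintegral_comp_eq_lintegral_meas_le_mul μ hf0 hf
    (fun t _ => (by fun_prop : Continuous g).intervalIntegrable 0 t)
    ((ae_restrict_iff' measurableSet_Ioi).2 (ae_of_all _ fun t (ht : 0 < t) => hg_nn t ht.le))
  simp only [g, integral_natCast_mul_pow_sub_one hr] at hlayer
  have hnull : ∀ t ∈ Set.Ioi (1 : ℝ), μ {ω | t ≤ f ω} = 0 := fun t ht =>
    measure_mono_null (fun ω (h : t ≤ f ω) => not_le.2 (lt_of_lt_of_le ht h)) (ae_iff.1 hf1)
  have hpow_int : Integrable (fun ω => f ω ^ r) μ := by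
    refine Integrable.of_bound (hf.pow_const r).aestronglyMeasurable 1 ?_
    filter_upwards [hf0, hf1] with ω h0 h1
    rw [Real.norm_eq_abs, abs_of_nonneg (pow_nonneg h0 r)]
    exact pow_le_one₀ h0 h1
  have hF_int : IntegrableOn (fun t => g t * F t) (Set.Ioc 0 1) :=
    ((by fun_prop : Continuous g).integrableOn_Icc.mono_set
      Set.Ioc_subset_Icc_self).mul_measureReal_le
  have hpow_nn : 0 ≤ᵐ[μ] fun ω => f ω ^ r := hf0.mono fun ω h => pow_nonneg h r
  have hgF_nn : 0 ≤ᵐ[volume.restrict (Set.Ioc 0 1)] fun t => g t * F t :=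
    (ae_restrict_iff' measurableSet_Ioc).2 (ae_of_all _ fun t ht =>
      mul_nonneg (hg_nn t ht.1.le) measureReal_nonneg)
  have hreal :
      ENNReal.ofReal (∫ ω, f ω ^ r ∂μ) = ENNReal.ofReal (∫ t in Set.Ioc 0 1, g t * F t) := by
    rw [ofReal_integral_eq_lintegral_ofReal hpow_int hpow_nn, hlayer,
      ofReal_integral_eq_lintegral_ofReal hF_int hgF_nn,
      ← Set.Ioc_union_Ioi_eq_Ioi zero_le_one,
      lintegral_union measurableSet_Ioi (Set.Ioc_disjoint_Ioi le_rfl),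
      setLIntegral_congr_fun measurableSet_Ioi fun t ht => by rw [hnull t ht, zero_mul],
      lintegral_zero, add_zero]
    · exact setLIntegral_congr_fun measurableSet_Ioc fun t ht => by
        rw [ENNReal.ofReal_mul (hg_nn t ht.1.le), ofReal_measureReal, mul_comm]
  have hrhs : (r : ℝ) * ∫ t in (0 : ℝ)..1, t ^ (r - 1) * F t = ∫ t in Set.Ioc 0 1, g t * F t := by
    simp only [intervalIntegral.integral_of_le zero_le_one, ← integral_const_mul, g, mul_assoc]
  rw [hrhs, ← ENNReal.ofReal_eq_ofReal_iff (integral_nonneg_of_ae hpow_nn)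
    (integral_nonneg_of_ae hgF_nn)]
  exact hreal

theorem pow_mul_ite_le_eq_indicator {r : ℕ} (hr : 1 ≤ r) (k m : ℕ) (c t : ℝ) :
    t ^ (r - 1) * (if t ≤ c then (1 - t) ^ k * t ^ m else 0) =
      Set.indicator {x | x ≤ c} (fun x => x ^ (m + r - 1) * (1 - x) ^ k) t := by
  simp only [Set.indicator_apply, Set.mem_ofPred_eq, Nat.add_sub_assoc hr, pow_add]
  split_ifs <;> ring

/-- Raw moments of a weighted lattice polynomial of independent uniform [0,1]
random variables: (1/r) E[Y_p^r] = Σ_{S⊆[n]} B_{p(e_S)}(n − |S| + r, |S| + 1). -/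
theorem wlp_uniform_moments {Ω : Type*} [MeasurableSpace Ω] (μ : Measure Ω)
    [IsProbabilityMeasure μ] (n : ℕ)
    (X : Fin n → Ω → ℝ) (hX : ∀ i, Measurable (X i))
    (hunif : ∀ i, Measure.map (X i) μ = volume.restrict (Set.Icc (0 : ℝ) 1))
    (hind : iIndepFun X μ)
    (p : (Fin n → ℝ) → ℝ) (hp : IsWLP 0 1 n p)
    (r : ℕ) (hr : 1 ≤ r) :
    (1 / r : ℝ) * ∫ ω, (p (fun i => X i ω)) ^ r ∂μ =
      ∑ S ∈ (Finset.univ (α := Fin n)).powerset,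
        ∫ t in (0 : ℝ)..(p (charVec 0 1 S)),
          t ^ (n - S.card + r - 1) * (1 - t) ^ S.card := by
  have hY : ∀ᵐ ω ∂μ, p (fun i => X i ω) ∈ Set.Icc (0 : ℝ) 1 := by
    filter_upwards [ae_all_iff.2 fun i => ae_mem_Icc_of_map_eq_uniform (hX i) (hunif i)]
      with ω hω using hp.mem_Icc hω
  have hYm : Measurable fun ω => p fun i => X i ω :=
    hp.continuous.measurable.comp (measurable_pi_lambda _ hX)
  rw [integral_pow_eq_mul_intervalIntegral_measureReal_le hYm.aemeasurable
      (hY.mono fun _ h => h.1) (hY.mono fun _ h => h.2) (by omega),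
    one_div, inv_mul_cancel_left₀ (by exact_mod_cast (by omega : r ≠ 0))]
  calc _ = ∫ t in (0 : ℝ)..1, ∑ S ∈ (Finset.univ (α := Fin n)).powerset,
        Set.indicator {x | x ≤ p (charVec 0 1 S)}
          (fun x => x ^ (n - S.card + r - 1) * (1 - x) ^ S.card) t := by
        refine intervalIntegral.integral_congr_ae (ae_of_all _ fun t ht => ?_)
        rw [Set.uIoc_of_le zero_le_one] at ht
        rw [hp.measureReal_le_apply_eq_sum_of_uniform hX hunif hind ht.1 ht.2, Finset.mul_sum]
        exact Finset.sum_congr rfl fun S _ => pow_mul_ite_le_eq_indicator hr _ _ _ _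
    _ = _ := by
        rw [intervalIntegral.integral_finsetSum fun S _ =>
          ((by fun_prop : Continuous fun x : ℝ => x ^ (n - S.card + r - 1) * (1 - x) ^ S.card)
            |>.integrableOn_Icc.indicator measurableSet_Iic).intervalIntegrable]
        exact Finset.sum_congr rfl fun S _ =>
          intervalIntegral.integral_indicator (hp.mem_Icc (charVec_mem_Icc zero_le_one S))
end

section
/- The expected value of the Choquet integral of a uniform random vector on [0,1]^n equals ∫_{[0,1]^n} C_μ(x) dx = Σ_{S ⊆ [n]} μ(S) · (n − |S|)! |S|! / (n + 1)!. -/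
/-!
By the layer-cake formula, `∫ min_{i ∈ S} xᵢ dx` over the unit cube is `∫₀¹ (1 - t)^|S| dt`,
i.e. `1 / (|S| + 1) = ∫₀¹ t^|S| dt`. The expected Choquet integral is therefore `∫₀¹ p(t) dt` with
`p(t) = ∑_S m_μ(S) t^|S|`, and undoing the Möbius transform inside `p` (a binomial expansion of
`(1 - t)^(n - |T|)`) gives `p(t) = ∑_T μ(T) t^|T| (1 - t)^(n - |T|)`, whose terms integrate to the
Beta values `|T|! (n - |T|)! / (n + 1)!`.
-/

open Finset MeasureTheory

theorem Finset.sum_powerset_sum_powerset_eq {α β : Type*} [DecidableEq α] [AddCommMonoid β]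
    (s : Finset α) (g : Finset α → Finset α → β) :
    ∑ S ∈ s.powerset, ∑ T ∈ S.powerset, g T S =
      ∑ T ∈ s.powerset, ∑ U ∈ (s \ T).powerset, g T (T ∪ U) := by
  rw [sum_comm' (t' := s.powerset) (s' := fun T => Icc T s)
    (fun S T => by simp only [mem_powerset, mem_Icc]; tauto)]
  refine sum_congr rfl fun T hT => ?_
  rw [Icc_eq_image_powerset (mem_powerset.mp hT), sum_image]
  intro U hU V hV hUV
  have hdisj : ∀ W ∈ (s \ T).powerset, Disjoint T W := fun W hW =>
    disjoint_of_subset_right (mem_powerset.mp hW) disjoint_sdiff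
  rw [← union_sdiff_cancel_left (hdisj U hU), ← union_sdiff_cancel_left (hdisj V hV)]
  exact congrArg (· \ T) hUV

def moebiusTransform {α R : Type*} [CommRing R] (f : Finset α → R) (S : Finset α) : R :=
  ∑ T ∈ S.powerset, (-1 : R) ^ (#S - #T) * f T

theorem sum_moebiusTransform_mul_pow {α R : Type*} [DecidableEq α] [CommRing R]
    (s : Finset α) (f : Finset α → R) (x : R) :
    ∑ S ∈ s.powerset, moebiusTransform f S * x ^ #S =
      ∑ T ∈ s.powerset, f T * (x ^ #T * (1 - x) ^ (#s - #T)) := by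
  simp only [moebiusTransform, sum_mul]
  rw [sum_powerset_sum_powerset_eq]
  refine sum_congr rfl fun T hT => ?_
  have hsub := mem_powerset.mp hT
  have hterm : ∀ U ∈ (s \ T).powerset,
      (-1 : R) ^ (#(T ∪ U) - #T) * f T * x ^ #(T ∪ U) = f T * x ^ #T * (-x) ^ #U := by
    intro U hU
    rw [card_union_of_disjoint
      (disjoint_of_subset_right (mem_powerset.mp hU) disjoint_sdiff), Nat.add_sub_cancel_left,
      neg_eq_neg_one_mul x, mul_pow, pow_add]
    ring
  have hbinom : ∑ U ∈ (s \ T).powerset, (-x) ^ #U = (1 - x) ^ (#s - #T) := by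
    rw [← card_sdiff_of_subset hsub, sub_eq_add_neg, ← prod_const, prod_one_add]
    simp only [prod_const]
  rw [sum_congr rfl hterm, ← mul_sum, hbinom, mul_assoc]

theorem integral_pow_mul_one_sub_pow (a b : ℕ) :
    ∫ x in (0 : ℝ)..1, x ^ a * (1 - x) ^ b =
      (a.factorial * b.factorial / (a + b + 1).factorial : ℝ) := by
  induction b generalizing a with
  | zero =>
    simp only [pow_zero, mul_one, integral_pow, Nat.factorial_zero, add_zero, Nat.factorial_succ]
    push_cast
    field_simp
    ring
  | succ b ih =>
    have hsplit : ∫ x in (0 : ℝ)..1, x ^ a * (1 - x) ^ (b + 1) =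
        (∫ x in (0 : ℝ)..1, x ^ a * (1 - x) ^ b) -
          ∫ x in (0 : ℝ)..1, x ^ (a + 1) * (1 - x) ^ b := by
      rw [← intervalIntegral.integral_sub
        ((by fun_prop : Continuous _).intervalIntegrable _ _)
        ((by fun_prop : Continuous _).intervalIntegrable _ _)]
      congr 1 with x
      ring
    rw [hsplit, ih, ih, show a + 1 + b + 1 = a + (b + 1) + 1 by ring,
      show a + (b + 1) + 1 = (a + b + 1) + 1 by ring]
    push_cast [Nat.factorial_succ]
    field_simp
    ring

theorem continuous_fold_min {ι : Type*} (S : Finset ι) (b : ℝ) :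
    Continuous fun x : ι → ℝ => S.fold min b x := by
  classical
  induction S using Finset.induction_on with
  | empty => exact continuous_const
  | insert i S hi ih =>
    simp only [fold_insert hi]
    exact (continuous_apply i).min ih

theorem setOf_le_fold_min_inter_Icc {ι : Type*} [DecidableEq ι] (S : Finset ι) {t : ℝ}
    (ht₀ : 0 ≤ t) (ht₁ : t ≤ 1) :
    {x : ι → ℝ | t ≤ S.fold min 1 x} ∩ Set.Icc 0 1 =
      Set.Icc (fun i => if i ∈ S then t else 0) 1 := by
  ext x
  simp only [Set.mem_inter_iff, Set.mem_ofPred_eq, le_fold_min, Set.mem_Icc, Pi.le_def,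
    Pi.zero_apply, Pi.one_apply]
  constructor
  · rintro ⟨⟨-, hS⟩, h0, h1⟩
    exact ⟨fun i => by split_ifs with hi; exacts [hS i hi, h0 i], h1⟩
  · rintro ⟨hlow, h1⟩
    refine ⟨⟨ht₁, fun i hi => by simpa [hi] using hlow i⟩, fun i => ?_, h1⟩
    have := hlow i
    split_ifs at this <;> linarith

theorem volume_setOf_le_fold_min_inter_Icc {ι : Type*} [Fintype ι] (S : Finset ι) {t : ℝ}
    (ht₀ : 0 ≤ t) (ht₁ : t ≤ 1) :
    volume ({x : ι → ℝ | t ≤ S.fold min 1 x} ∩ Set.Icc 0 1) = ENNReal.ofReal ((1 - t) ^ #S) := by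
  classical
  rw [setOf_le_fold_min_inter_Icc S ht₀ ht₁, Real.volume_Icc_pi]
  simp only [Pi.one_apply, apply_ite (fun c => ENNReal.ofReal (1 - c)), sub_zero,
    ENNReal.ofReal_one, Fintype.prod_ite_mem, prod_const,
    ENNReal.ofReal_pow (sub_nonneg.mpr ht₁)]

theorem setIntegral_fold_min_Icc {ι : Type*} [Fintype ι] (S : Finset ι) :
    ∫ x in Set.Icc (0 : ι → ℝ) 1, S.fold min 1 x = 1 / (#S + 1) := by
  have hint : IntegrableOn (fun x : ι → ℝ => S.fold min 1 x) (Set.Icc 0 1) :=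
    (continuous_fold_min S 1).continuousOn.integrableOn_compact isCompact_Icc
  have hnonneg : 0 ≤ᵐ[volume.restrict (Set.Icc (0 : ι → ℝ) 1)] fun x => S.fold min 1 x := by
    filter_upwards [ae_restrict_mem measurableSet_Icc] with x hx
    exact (le_fold_min _).mpr ⟨zero_le_one, fun i _ => hx.1 i⟩
  have hle_one : ∀ᵐ x ∂volume.restrict (Set.Icc (0 : ι → ℝ) 1), S.fold min 1 x ≤ 1 :=
    ae_of_all _ fun x => (fold_min_le _).mpr (Or.inl le_rfl)
  rw [hint.integral_eq_integral_Ioc_meas_le hnonneg hle_one,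
    ← intervalIntegral.integral_of_le zero_le_one]
  calc ∫ t in (0 : ℝ)..1, (volume.restrict (Set.Icc (0 : ι → ℝ) 1)).real {x | t ≤ S.fold min 1 x}
      = ∫ t in (0 : ℝ)..1, (1 - t) ^ #S := by
        refine intervalIntegral.integral_congr fun t ht => ?_
        rw [Set.uIcc_of_le zero_le_one] at ht
        rw [measureReal_def, Measure.restrict_apply' measurableSet_Icc,
          volume_setOf_le_fold_min_inter_Icc S ht.1 ht.2,
          ENNReal.toReal_ofReal (pow_nonneg (sub_nonneg.mpr ht.2) _)]
    _ = 1 / (#S + 1) := by simp [intervalIntegral.integral_comp_sub_left fun u : ℝ => u ^ #S]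

theorem choquet_integral_expected_value_general (n : ℕ) (m : Finset (Fin n) → ℝ) :
    ∫ x in Set.Icc (0 : Fin n → ℝ) 1,
        ∑ S ∈ (Finset.univ (α := Fin n)).powerset,
          (∑ T ∈ S.powerset, (-1 : ℝ) ^ (S.card - T.card) * m T) * (S.fold min 1 x) =
      ∑ S ∈ (Finset.univ (α := Fin n)).powerset,
        m S * (((n - S.card).factorial : ℝ) * (S.card.factorial : ℝ) /
          ((n + 1).factorial : ℝ)) := by
  have hint : ∀ S ∈ (univ : Finset (Fin n)).powerset,
      IntegrableOn (fun x => moebiusTransform m S * S.fold min 1 x) (Set.Icc 0 1) :=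
    fun S _ => (continuous_const.mul (continuous_fold_min S 1)).continuousOn.integrableOn_compact
      isCompact_Icc
  have hcont : ∀ f : ℝ → ℝ, Continuous f → IntervalIntegrable f volume 0 1 :=
    fun f hf => hf.intervalIntegrable 0 1
  calc ∫ x in Set.Icc (0 : Fin n → ℝ) 1,
        ∑ S ∈ univ.powerset, moebiusTransform m S * S.fold min 1 x
      = ∑ S ∈ univ.powerset, moebiusTransform m S * ∫ x in (0 : ℝ)..1, x ^ #S := by
        rw [integral_finsetSum _ hint]
        refine sum_congr rfl fun S _ => ?_
        rw [integral_const_mul, setIntegral_fold_min_Icc, integral_pow]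
        norm_num
    _ = ∫ x in (0 : ℝ)..1, ∑ T ∈ univ.powerset, m T * (x ^ #T * (1 - x) ^ (n - #T)) := by
        simp only [← intervalIntegral.integral_const_mul]
        rw [← intervalIntegral.integral_finsetSum fun S _ => hcont _ (by fun_prop)]
        congr 1 with x
        rw [sum_moebiusTransform_mul_pow, card_univ, Fintype.card_fin]
    _ = _ := by
        rw [intervalIntegral.integral_finsetSum fun T _ => hcont _ (by fun_prop)]
        refine sum_congr rfl fun T _ => ?_
        rw [intervalIntegral.integral_const_mul, integral_pow_mul_one_sub_pow,
          Nat.add_sub_cancel' (card_le_univ T |>.trans_eq (Fintype.card_fin n))]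
        ring

/-- Expected value of the Choquet integral with respect to a fuzzy measure μ of a
uniform random vector on [0,1]^n, where the Choquet integral is
C_μ(x) = Σ_S m_μ(S) ⋀_{i∈S} x_i with m_μ the Möbius transform of μ. -/
theorem choquet_integral_expected_value (n : ℕ) (m : Finset (Fin n) → ℝ)
    (hrange : ∀ S, m S ∈ Set.Icc (0 : ℝ) 1)
    (hmono : ∀ S T : Finset (Fin n), S ⊆ T → m S ≤ m T)
    (hbot : m ∅ = 0) (htop : m Finset.univ = 1) :
    ∫ x in Set.Icc (0 : Fin n → ℝ) 1,
        ∑ S ∈ (Finset.univ (α := Fin n)).powerset,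
          (∑ T ∈ S.powerset, (-1 : ℝ) ^ (S.card - T.card) * m T) * (S.fold min 1 x) =
      ∑ S ∈ (Finset.univ (α := Fin n)).powerset,
        m S * (((n - S.card).factorial : ℝ) * (S.card.factorial : ℝ) /
          ((n + 1).factorial : ℝ)) :=
  choquet_integral_expected_value_general n m
end
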